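/- Let n, m, p ≥ 1, let A ∈ ℝ^{n×n}, B ∈ ℝ^{n×m}, C ∈ ℝ^{p×n}, D ∈ ℝ^{p×m}, let γ > 0, and let P ∈ ℝ^{n×n} be symmetric positive definite satisfying the bounded-real LMI with gain γ. Then for every input sequence u : ℕ → ℝ^m with ∑_{k=0}^{∞} ‖u_k‖² < ∞, the output sequence z of the DT-LTI system satisfies: the series ∑_{k=0}^{∞} ‖z_k‖² converges and ∑_{k=0}^{∞} ‖z_k‖² ≤ γ² ∑_{k=0}^{∞} ‖u_k‖² (i.e. the system has ℓ₂-gain bound γ). -/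

import Mathlib

open Matrix

/-! The quadratic storage function `V h = hᵀ P h` is nonnegative, vanishes at `h₀ = 0`, and, evaluating
the LMI on the stacked vector `(h_k, u_k)`, satisfies the dissipation inequality
`V h_{k+1} + ‖z_k‖² ≤ V h_k + γ² ‖u_k‖²`. Telescoping gives `∑_{k<N} ‖z_k‖² ≤ γ² ∑_{k<N} ‖u_k‖²` for
every `N`, which bounds the partial sums of the nonnegative series `∑ ‖z_k‖²`. -/

/-- Squared Euclidean norm of a vector in `ℝ^d`. -/
def sqNorm {d : ℕ} (v : Fin d → ℝ) : ℝ := ∑ i, v i ^ 2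

/-- State trajectory of the DT-LTI system `h_{k+1} = A h_k + B u_k`, `h_0 = 0`. -/
noncomputable def ltiState {n m : ℕ} (A : Matrix (Fin n) (Fin n) ℝ)
    (B : Matrix (Fin n) (Fin m) ℝ) (u : ℕ → Fin m → ℝ) : ℕ → Fin n → ℝ
  | 0 => 0
  | k + 1 => A.mulVec (ltiState A B u k) + B.mulVec (u k)

/-- Output trajectory `z_k = C h_k + D u_k` of the DT-LTI system. -/
noncomputable def ltiOutput {n m p : ℕ} (A : Matrix (Fin n) (Fin n) ℝ)
    (B : Matrix (Fin n) (Fin m) ℝ) (C : Matrix (Fin p) (Fin n) ℝ)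
    (D : Matrix (Fin p) (Fin m) ℝ) (u : ℕ → Fin m → ℝ) (k : ℕ) : Fin p → ℝ :=
  C.mulVec (ltiState A B u k) + D.mulVec (u k)

lemma sqNorm_eq_dotProduct {d : ℕ} (v : Fin d → ℝ) : sqNorm v = v ⬝ᵥ v := by
  simp only [sqNorm, dotProduct, sq]

lemma sqNorm_nonneg {d : ℕ} (v : Fin d → ℝ) : 0 ≤ sqNorm v :=
  Finset.sum_nonneg fun i _ => sq_nonneg (v i)

section Dissipation

variable {V z w : ℕ → ℝ} {c : ℝ}

lemma sum_range_add_le_of_dissipation (hstep : ∀ k, V (k + 1) + z k ≤ V k + c * w k) (N : ℕ) :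
    ∑ k ∈ Finset.range N, z k + V N ≤ V 0 + c * ∑ k ∈ Finset.range N, w k := by
  induction N with
  | zero => simp
  | succ N ih =>
    rw [Finset.sum_range_succ, Finset.sum_range_succ, mul_add]
    linarith [hstep N]

lemma summable_and_tsum_le_of_dissipation (hV0 : V 0 = 0) (hV : ∀ k, 0 ≤ V k)
    (hz : ∀ k, 0 ≤ z k) (hw : Summable w) (hw0 : ∀ k, 0 ≤ w k) (hc : 0 ≤ c)
    (hstep : ∀ k, V (k + 1) + z k ≤ V k + c * w k) :
    Summable z ∧ ∑' k, z k ≤ c * ∑' k, w k := by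
  have hbound : ∀ N, ∑ k ∈ Finset.range N, z k ≤ c * ∑' k, w k := fun N =>
    calc ∑ k ∈ Finset.range N, z k
        ≤ c * ∑ k ∈ Finset.range N, w k := by
          linarith [sum_range_add_le_of_dissipation hstep N, hV N]
      _ ≤ c * ∑' k, w k :=
          mul_le_mul_of_nonneg_left (hw.sum_le_tsum _ fun k _ => hw0 k) hc
  exact ⟨summable_of_sum_range_le hz hbound, Real.tsum_le_of_sum_range_le hz hbound⟩

end Dissipation

section BoundedReal

variable {ι κ ρ : Type*} [Fintype ι] [Fintype κ] [Fintype ρ] [DecidableEq κ]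
  (A : Matrix ι ι ℝ) (B : Matrix ι κ ℝ) (C : Matrix ρ ι ℝ) (D : Matrix ρ κ ℝ) (γ : ℝ)
  (P : Matrix ι ι ℝ)

def boundedRealMatrix : Matrix (ι ⊕ κ) (ι ⊕ κ) ℝ :=
  fromBlocks (Aᵀ * P * A - P + Cᵀ * C) (Aᵀ * P * B + Cᵀ * D)
    (Bᵀ * P * A + Dᵀ * C) (Bᵀ * P * B + Dᵀ * D - γ ^ 2 • 1)

lemma sumElim_dotProduct_boundedRealMatrix_mulVec (h : ι → ℝ) (w : κ → ℝ) :
    Sum.elim h w ⬝ᵥ boundedRealMatrix A B C D γ P *ᵥ Sum.elim h w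
      = (A *ᵥ h + B *ᵥ w) ⬝ᵥ P *ᵥ (A *ᵥ h + B *ᵥ w) - h ⬝ᵥ P *ᵥ h
        + (C *ᵥ h + D *ᵥ w) ⬝ᵥ (C *ᵥ h + D *ᵥ w) - γ ^ 2 * (w ⬝ᵥ w) := by
  simp only [boundedRealMatrix, fromBlocks_mulVec, sumElim_dotProduct_sumElim, add_mulVec,
    sub_mulVec, smul_mulVec, one_mulVec, ← mulVec_mulVec, dotProduct_add, dotProduct_sub,
    dotProduct_mulVec, vecMul_transpose, dotProduct_smul, smul_eq_mul, mulVec_add,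
    add_vecMul, add_dotProduct, Sum.elim_comp_inl, Sum.elim_comp_inr]
  ring

variable {A B C D γ P}

lemma dissipation_step_of_boundedRealMatrix
    (hLMI : (-boundedRealMatrix A B C D γ P).PosSemidef) (h : ι → ℝ) (w : κ → ℝ) :
    (A *ᵥ h + B *ᵥ w) ⬝ᵥ P *ᵥ (A *ᵥ h + B *ᵥ w) + (C *ᵥ h + D *ᵥ w) ⬝ᵥ (C *ᵥ h + D *ᵥ w)
      ≤ h ⬝ᵥ P *ᵥ h + γ ^ 2 * (w ⬝ᵥ w) := by
  have hneg := hLMI.dotProduct_mulVec_nonneg (Sum.elim h w)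
  simp only [star_trivial, neg_mulVec, dotProduct_neg,
    sumElim_dotProduct_boundedRealMatrix_mulVec] at hneg
  linarith

end BoundedReal

theorem stmt1_general {n m p : ℕ}
    (A : Matrix (Fin n) (Fin n) ℝ) (B : Matrix (Fin n) (Fin m) ℝ)
    (C : Matrix (Fin p) (Fin n) ℝ) (D : Matrix (Fin p) (Fin m) ℝ)
    (γ : ℝ) (P : Matrix (Fin n) (Fin n) ℝ) (hP : P.PosDef)
    (hLMI : (-(Matrix.fromBlocks
        (Aᵀ * P * A - P + Cᵀ * C) (Aᵀ * P * B + Cᵀ * D)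
        (Bᵀ * P * A + Dᵀ * C) (Bᵀ * P * B + Dᵀ * D - γ ^ 2 • 1))).PosDef)
    (u : ℕ → Fin m → ℝ) (hu : Summable fun k => sqNorm (u k)) :
    (Summable fun k => sqNorm (ltiOutput A B C D u k)) ∧
      ∑' k, sqNorm (ltiOutput A B C D u k) ≤ γ ^ 2 * ∑' k, sqNorm (u k) := by
  have hBRL : (-boundedRealMatrix A B C D γ P).PosSemidef := hLMI.posSemidef
  refine summable_and_tsum_le_of_dissipation
    (V := fun k => ltiState A B u k ⬝ᵥ P *ᵥ ltiState A B u k) (by simp [ltiState])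
    (fun k => hP.posSemidef.dotProduct_mulVec_nonneg _) (fun k => sqNorm_nonneg _) hu
    (fun k => sqNorm_nonneg _) (sq_nonneg γ) fun k => ?_
  simp only [ltiOutput, ltiState, sqNorm_eq_dotProduct]
  exact dissipation_step_of_boundedRealMatrix hBRL _ _

theorem stmt1 {n m p : ℕ} (hn : 1 ≤ n) (hm : 1 ≤ m) (hp : 1 ≤ p)
    (A : Matrix (Fin n) (Fin n) ℝ) (B : Matrix (Fin n) (Fin m) ℝ)
    (C : Matrix (Fin p) (Fin n) ℝ) (D : Matrix (Fin p) (Fin m) ℝ)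
    (γ : ℝ) (hγ : 0 < γ) (P : Matrix (Fin n) (Fin n) ℝ) (hP : P.PosDef)
    (hLMI : (-(Matrix.fromBlocks
        (Aᵀ * P * A - P + Cᵀ * C) (Aᵀ * P * B + Cᵀ * D)
        (Bᵀ * P * A + Dᵀ * C) (Bᵀ * P * B + Dᵀ * D - γ ^ 2 • 1))).PosDef)
    (u : ℕ → Fin m → ℝ) (hu : Summable fun k => sqNorm (u k)) :
    (Summable fun k => sqNorm (ltiOutput A B C D u k)) ∧
      ∑' k, sqNorm (ltiOutput A B C D u k) ≤ γ ^ 2 * ∑' k, sqNorm (u k) :=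
  stmt1_general A B C D γ P hP hLMI u hu
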